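/- Let 𝔉 be a saturated formation and G a finite group. Then the following three statements are equivalent: (i) G ∈ 𝔉; (ii) every chief factor of G is 𝔉-central in G; (iii) G has a normal 𝔉-hypercentral subgroup N such that G/N ∈ 𝔉. -/

import Mathlib

/-- A class of finite groups. -/
def GroupClass : Type 1 :=
  ∀ (G : Type) [Group G] [Finite G], Prop

instance SemidirectProduct.instFinite {N G : Type*} [Group N] [Group G] [Finite N] [Finite G]
    (φ : G →* MulAut N) : Finite (N ⋊[φ] G) :=
  Finite.of_injective (fun x => (x.left, x.right)) (by
    rintro ⟨a, b⟩ ⟨c, d⟩ h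
    simpa [Prod.ext_iff, SemidirectProduct.ext_iff] using h)

/-- The `F`-residual of a finite group `G`. -/
def GroupClass.residual (F : GroupClass) (G : Type) [Group G] [Finite G] : Subgroup G :=
  sInf {N : Subgroup G | ∃ _ : N.Normal, F (G ⧸ N)}

/-- `F` is a formation. -/
structure GroupClass.IsFormation (F : GroupClass) : Prop where
  nonempty : ∃ (G : Type) (_ : Group G) (_ : Finite G), F G
  isoClosed : ∀ (G H : Type) [Group G] [Finite G] [Group H] [Finite H],
    (G ≃* H) → F G → F H
  quot_residual_mem : ∀ (G : Type) [Group G] [Finite G] (N : Subgroup G) (_ : N.Normal),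
    F.residual G ≤ N → F (G ⧸ N)

/-- `F` is hereditary (subgroup-closed). -/
def GroupClass.Hereditary (F : GroupClass) : Prop :=
  ∀ (G : Type) [Group G] [Finite G], F G → ∀ H : Subgroup G, F H

/-- `F` is saturated. -/
def GroupClass.Saturated (F : GroupClass) : Prop :=
  ∀ (G : Type) [Group G] [Finite G], F.residual G ≤ frattini G → F G

section SectionMachinery

variable {G : Type} [Group G]

/-- conjugation by `g` preserves `S.subgroupOf R` when `R, S` are normal. -/
theorem conj_map_subgroupOf (R S : Subgroup G) [hR : R.Normal] [hS : S.Normal] (g : G) :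
    (S.subgroupOf R).map ((MulAut.conjNormal g : MulAut R) : R →* R) = S.subgroupOf R := by
  ext x
  simp only [Subgroup.mem_map, Subgroup.mem_subgroupOf]
  constructor
  · rintro ⟨y, hy, rfl⟩
    simpa [MulAut.conjNormal_apply] using hS.conj_mem _ hy g
  · intro hx
    refine ⟨(MulAut.conjNormal g).symm x, ?_, by simp⟩
    simp only [Subgroup.mem_subgroupOf, MulAut.conjNormal_symm_apply]
    simpa using hS.conj_mem _ hx g⁻¹

/-- The conjugation action of `G` on the normal section `R/S`. -/
def secAction (R S : Subgroup G) [R.Normal] [S.Normal] :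
    G →* MulAut (R ⧸ S.subgroupOf R) where
  toFun g := QuotientGroup.congr (S.subgroupOf R) (S.subgroupOf R)
      (MulAut.conjNormal g) (conj_map_subgroupOf R S g)
  map_one' := by
    ext x
    induction x using QuotientGroup.induction_on with
    | H r => simp [QuotientGroup.congr_mk]
  map_mul' g₁ g₂ := by
    ext x
    induction x using QuotientGroup.induction_on with
    | H r => simp [QuotientGroup.congr_mk, map_mul]

/-- The centraliser in `G` of the normal section `R/S`. -/
def secCentralizer (R S : Subgroup G) [R.Normal] [S.Normal] : Subgroup G :=
  (secAction R S).ker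

instance secCentralizer.normal (R S : Subgroup G) [R.Normal] [S.Normal] :
    (secCentralizer R S).Normal := MonoidHom.normal_ker _

/-- The semidirect product `[R/S](G/K)` for a normal subgroup `K ≤ C_G(R/S)`. -/
abbrev secSDP (R S K : Subgroup G) [R.Normal] [S.Normal] [K.Normal]
    (hK : K ≤ secCentralizer R S) : Type :=
  (R ⧸ S.subgroupOf R) ⋊[QuotientGroup.lift K (secAction R S) (fun _ hx => hK hx)] (G ⧸ K)

end SectionMachinery

/-- The normal section `R/S` of `G` is `F`-central in `G`. -/
def FCentralSection (F : GroupClass) {G : Type} [Group G] [Finite G]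
    (R S : Subgroup G) [R.Normal] [S.Normal] : Prop :=
  ∃ (K : Subgroup G) (hK : K.Normal),
    haveI := hK
    ∃ hle : K ≤ secCentralizer R S, F (secSDP R S K hle)

/-- `H/K` is a chief factor of `G`. -/
def IsChiefFactor {G : Type} [Group G] (H K : Subgroup G) : Prop :=
  H.Normal ∧ K.Normal ∧ K < H ∧
    ∀ L : Subgroup G, L.Normal → K ≤ L → L ≤ H → L = K ∨ L = H

/-- A normal subgroup `N` of `G` is `F`-hypercentral in `G`:
every chief factor of `G` below `N` is `F`-central in `G`. -/
def FHypercentralIn (F : GroupClass) {G : Type} [Group G] [Finite G] (N : Subgroup G) : Prop :=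
  N.Normal ∧ ∀ H K : Subgroup G, ∀ hcf : IsChiefFactor H K, H ≤ N →
    @FCentralSection F G _ _ H K hcf.1 hcf.2.1

/-- The `F`-hypercentre of `G`: the product of all `F`-hypercentral normal subgroups. -/
def FHypercentre (F : GroupClass) (G : Type) [Group G] [Finite G] : Subgroup G :=
  ⨆ (N : Subgroup G) (_ : FHypercentralIn F N), N

/-- `A` is `K`-`F`-subnormal in `G`. -/
def KFSubnormalIn (F : GroupClass) {G : Type} [Group G] [Finite G] (A : Subgroup G) : Prop :=
  ∃ (n : ℕ) (c : ℕ → Subgroup G), c 0 = A ∧ c n = ⊤ ∧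
    ∀ i < n, c i ≤ c (i + 1) ∧
      (((c i).subgroupOf (c (i + 1))).Normal ∨
        F ((c (i + 1)) ⧸ ((c i).subgroupOf (c (i + 1))).normalCore))

/-!
(i) ⇒ (ii): for `G ∈ 𝔉` and a normal section `R/S`, the projection `[R/S](G/S) → G/S` and the
map `(rS, gS) ↦ rgS` have trivially intersecting kernels, so `[R/S](G/S)` is a subdirect product
of two copies of `G/S ∈ 𝔉`. (ii) ⇒ (iii) with `N = G`.

(iii) ⇒ (i) by induction on `|G|`: for a minimal normal `M ≤ N`, the pair `(G/M, N/M)` satisfies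
(iii), so `G/M ∈ 𝔉` and the residual `G^𝔉` is `1` or `M`. If `G^𝔉 = M`, the `𝔉`-centrality of
`M` gives `K ≤ C_G(M)` with `[M](G/K) ∈ 𝔉`; then `G/K ∈ 𝔉`, so `M ≤ K` and `M` is abelian. If
`M ≤ Φ(G)`, saturation applies. Otherwise a maximal subgroup `U` not containing `M` complements
`M`, and `mu ↦ (m, uK)` maps `G` onto `[M](G/K)` injectively on `M`, so `G^𝔉 = M` cannot lie in
its kernel.
-/

open scoped commutatorElement

namespace GroupClass

variable (F : GroupClass) {G H : Type} [Group G] [Finite G] [Group H] [Finite H]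

instance residual_normal : (F.residual G).Normal where
  conj_mem x hx g := Subgroup.mem_sInf.2 fun N ⟨hN, hq⟩ =>
    hN.conj_mem x (Subgroup.mem_sInf.1 hx N ⟨hN, hq⟩) g

theorem residual_le {N : Subgroup G} (hN : N.Normal) (h : F (G ⧸ N)) : F.residual G ≤ N :=
  sInf_le ⟨hN, h⟩

namespace IsFormation

variable {F}

theorem mem_iff_residual_eq_bot (hF : F.IsFormation) : F G ↔ F.residual G = ⊥ :=
  ⟨fun h => le_bot_iff.1 <| F.residual_le inferInstance <|
      hF.isoClosed _ _ QuotientGroup.quotientBot.symm h,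
    fun h => hF.isoClosed _ _ QuotientGroup.quotientBot <|
      hF.quot_residual_mem G ⊥ inferInstance h.le⟩

theorem residual_le_ker (hF : F.IsFormation) {f : G →* H} (hf : Function.Surjective f)
    (hH : F H) : F.residual G ≤ f.ker :=
  F.residual_le f.normal_ker <|
    hF.isoClosed _ _ (QuotientGroup.quotientKerEquivOfSurjective f hf).symm hH

theorem mem_of_surjective (hF : F.IsFormation) {f : G →* H} (hf : Function.Surjective f)
    (hG : F G) : F H :=
  hF.isoClosed _ _ (QuotientGroup.quotientKerEquivOfSurjective f hf) <|
    hF.quot_residual_mem G f.ker f.normal_ker <|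
      (hF.mem_iff_residual_eq_bot.1 hG).trans_le bot_le

theorem quotient_mem (hF : F.IsFormation) (N : Subgroup G) [N.Normal] (hG : F G) : F (G ⧸ N) :=
  hF.mem_of_surjective (QuotientGroup.mk'_surjective N) hG

theorem mem_of_ker_inf_ker_eq_bot (hF : F.IsFormation) {H₁ H₂ : Type} [Group H₁] [Finite H₁]
    [Group H₂] [Finite H₂] {f₁ : G →* H₁} {f₂ : G →* H₂} (hf₁ : Function.Surjective f₁)
    (hf₂ : Function.Surjective f₂) (h₁ : F H₁) (h₂ : F H₂) (hker : f₁.ker ⊓ f₂.ker = ⊥) : F G :=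
  hF.mem_iff_residual_eq_bot.2 <| le_bot_iff.1 <|
    hker ▸ le_inf (hF.residual_le_ker hf₁ h₁) (hF.residual_le_ker hf₂ h₂)

end IsFormation

end GroupClass

section SectionAction

variable {G : Type} [Group G] (R S : Subgroup G) [R.Normal] [S.Normal]

theorem secAction_mk (g : G) (r : R) :
    secAction R S g (r : R ⧸ S.subgroupOf R) =
      ((⟨g * r * g⁻¹, ‹R.Normal›.conj_mem r r.2 g⟩ : R) : R ⧸ S.subgroupOf R) :=
  rfl

theorem secAction_mk_eq_self_iff (g : G) (r : R) :
    secAction R S g (r : R ⧸ S.subgroupOf R) = r ↔ ⁅g, (r : G)⁆ ∈ S := by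
  rw [secAction_mk, QuotientGroup.eq_iff_div_mem, Subgroup.mem_subgroupOf]
  simp [commutatorElement_def, div_eq_mul_inv]

variable {R S}

theorem mem_secCentralizer_iff {g : G} : g ∈ secCentralizer R S ↔ ∀ r ∈ R, ⁅g, r⁆ ∈ S := by
  refine ⟨fun h r hr => ?_, fun h => MulEquiv.ext fun x => ?_⟩
  · exact (secAction_mk_eq_self_iff R S g ⟨r, hr⟩).1 <|
      DFunLike.congr_fun (h : secAction R S g = 1) _
  · induction x using QuotientGroup.induction_on with
    | H r => exact (secAction_mk_eq_self_iff R S g r).2 (h r r.2)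

variable (R S) in
theorem le_secCentralizer : S ≤ secCentralizer R S := fun s hs =>
  mem_secCentralizer_iff.2 fun r _ => by
    rw [commutatorElement_def, mul_assoc, mul_assoc]
    exact S.mul_mem hs (by simpa [mul_assoc] using ‹S.Normal›.conj_mem _ (S.inv_mem hs) r)

theorem mem_secCentralizer_bot_iff {g : G} :
    g ∈ secCentralizer R ⊥ ↔ ∀ r ∈ R, Commute g r := by
  simp only [mem_secCentralizer_iff, Subgroup.mem_bot, commutatorElement_eq_one_iff_commute]

end SectionAction

theorem SemidirectProduct.map_surjective {N₁ G₁ N₂ G₂ : Type*} [Group N₁] [Group G₁] [Group N₂]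
    [Group G₂] {φ₁ : G₁ →* MulAut N₁} {φ₂ : G₂ →* MulAut N₂} {fn : N₁ →* N₂} {fg : G₁ →* G₂}
    (h : ∀ g : G₁, fn.comp (φ₁ g).toMonoidHom = (φ₂ (fg g)).toMonoidHom.comp fn)
    (hn : Function.Surjective fn) (hg : Function.Surjective fg) :
    Function.Surjective (SemidirectProduct.map fn fg h) := by
  rintro ⟨n, g⟩
  obtain ⟨n, rfl⟩ := hn n
  obtain ⟨g, rfl⟩ := hg g
  exact ⟨⟨n, g⟩, rfl⟩

section SectionSemidirectProduct

variable {G : Type} [Group G] (R S K : Subgroup G) [R.Normal] [S.Normal] [K.Normal]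
  (hK : K ≤ secCentralizer R S) (hSK : S ≤ K)

def secSDPToQuotient : secSDP R S K hK →* G ⧸ K :=
  SemidirectProduct.lift
    (QuotientGroup.map (S.subgroupOf R) K R.subtype fun _ hs => hSK hs)
    (MonoidHom.id _) fun g => by
      induction g using QuotientGroup.induction_on with
      | H g => ext; rfl

theorem secSDPToQuotient_surjective : Function.Surjective (secSDPToQuotient R S K hK hSK) :=
  fun y => ⟨SemidirectProduct.inr y, by simp [secSDPToQuotient]⟩

theorem ker_secSDPToQuotient_inf_ker_rightHom :
    (secSDPToQuotient R S S (le_secCentralizer R S) le_rfl).ker ⊓ SemidirectProduct.rightHom.ker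
      = ⊥ := by
  refine eq_bot_iff.2 fun ⟨n, g⟩ ⟨hx₁, (hg : g = 1)⟩ => ?_
  subst hg
  induction n using QuotientGroup.induction_on with
  | H r =>
    have hr : (r : G) ∈ S := by
      have : QuotientGroup.map (S.subgroupOf R) S R.subtype (fun _ hs => hs) r = 1 := by
        simpa [secSDPToQuotient] using hx₁
      exact (QuotientGroup.eq_one_iff _).1 this
    rw [Subgroup.mem_bot]
    ext
    · exact (QuotientGroup.eq_one_iff r).2 (Subgroup.mem_subgroupOf.2 hr)
    · rfl

end SectionSemidirectProduct

theorem GroupClass.IsFormation.fCentralSection_of_mem {F : GroupClass} (hF : F.IsFormation)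
    {G : Type} [Group G] [Finite G] (hG : F G) (R S : Subgroup G) [R.Normal] [S.Normal] :
    FCentralSection F R S := by
  have hGS : F (G ⧸ S) := hF.quotient_mem S hG
  exact ⟨S, inferInstance, le_secCentralizer R S,
    hF.mem_of_ker_inf_ker_eq_bot (secSDPToQuotient_surjective R S S _ le_rfl)
      SemidirectProduct.rightHom_surjective hGS hGS (ker_secSDPToQuotient_inf_ker_rightHom R S)⟩

theorem FCentralSection.of_comap {F : GroupClass} (hF : F.IsFormation) {G H : Type} [Group G]
    [Finite G] [Group H] [Finite H] {f : G →* H} (hf : Function.Surjective f)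
    {R S : Subgroup H} [R.Normal] [S.Normal]
    (h : FCentralSection F (R.comap f) (S.comap f)) : FCentralSection F R S := by
  obtain ⟨K, hK, hKC, hsdp⟩ := h
  have hKf : (K.map f).Normal := hK.map f hf
  have hKC' : K.map f ≤ secCentralizer R S := by
    rintro _ ⟨k, hk, rfl⟩
    refine mem_secCentralizer_iff.2 fun r hr => ?_
    obtain ⟨r, rfl⟩ := hf r
    simpa [map_commutatorElement] using mem_secCentralizer_iff.1 (hKC hk) r hr
  let fn : R.comap f ⧸ (S.comap f).subgroupOf (R.comap f) →* R ⧸ S.subgroupOf R :=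
    QuotientGroup.map _ _ (f.subgroupComap R) fun _ hx => hx
  let fg : G ⧸ K →* H ⧸ K.map f := QuotientGroup.map K _ f (Subgroup.le_comap_map f K)
  have hcompat (g : G ⧸ K) :
      fn.comp (QuotientGroup.lift K (secAction _ _) (fun _ hx => hKC hx) g).toMonoidHom =
        (QuotientGroup.lift (K.map f) (secAction R S) (fun _ hx => hKC' hx) (fg g)).toMonoidHom.comp
          fn := by
    induction g using QuotientGroup.induction_on with
    | H g =>
      ext r
      have : f (MulAut.conjNormal g r) = f g * f r * (f g)⁻¹ := by simp
      exact congrArg QuotientGroup.mk (Subtype.ext this)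
  refine ⟨K.map f, hKf, hKC', hF.mem_of_surjective
    (SemidirectProduct.map_surjective hcompat ?_ ?_) hsdp⟩
  · exact QuotientGroup.map_surjective_of_surjective _ _ _
      (QuotientGroup.mk_surjective.comp (f.subgroupComap_surjective_of_surjective R hf)) _
  · exact QuotientGroup.map_surjective_of_surjective _ _ _
      (QuotientGroup.mk_surjective.comp hf) _

theorem IsChiefFactor.comap {G H : Type} [Group G] [Group H] {f : G →* H}
    (hf : Function.Surjective f) {A B : Subgroup H} (h : IsChiefFactor A B) :
    IsChiefFactor (A.comap f) (B.comap f) := by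
  obtain ⟨hA, hB, hlt, hmin⟩ := h
  refine ⟨hA.comap f, hB.comap f, (Subgroup.comap_lt_comap_of_surjective hf).2 hlt,
    fun L hL hBL hLA => ?_⟩
  have hLmap : (L.map f).comap f = L := by
    rw [Subgroup.comap_map_eq, sup_eq_left]
    exact (Subgroup.ker_le_comap f B).trans hBL
  have hBL' : B ≤ L.map f := by
    rw [← Subgroup.map_comap_eq_self_of_surjective hf B]
    exact Subgroup.map_mono hBL
  rcases hmin _ (hL.map f hf) hBL' (Subgroup.map_le_iff_le_comap.2 hLA) with h | h
  · exact .inl (by rw [← hLmap, h])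
  · exact .inr (by rw [← hLmap, h])

theorem exists_isChiefFactor_bot_le {G : Type} [Group G] [Finite G] {N : Subgroup G}
    (hN : N.Normal) (hne : N ≠ ⊥) : ∃ M ≤ N, IsChiefFactor M ⊥ := by
  obtain ⟨M, ⟨hMn, hMne, hMN⟩, hmin⟩ :=
    (Set.toFinite {L : Subgroup G | L.Normal ∧ L ≠ ⊥ ∧ L ≤ N}).exists_minimal ⟨N, hN, hne, le_rfl⟩
  refine ⟨M, hMN, hMn, inferInstance, bot_lt_iff_ne_bot.2 hMne, fun L hL _ hLM => ?_⟩
  by_cases hLb : L = ⊥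
  · exact .inl hLb
  · exact .inr (le_antisymm hLM (hmin ⟨hL, hLb, hLM.trans hMN⟩ hLM))

theorem FHypercentralIn.map_mk' {F : GroupClass} (hF : F.IsFormation) {G : Type} [Group G]
    [Finite G] {N M : Subgroup G} [M.Normal] (hN : FHypercentralIn F N) (hMN : M ≤ N) :
    FHypercentralIn F (N.map (QuotientGroup.mk' M)) := by
  have hf := QuotientGroup.mk'_surjective M
  refine ⟨hN.1.map _ hf, fun A B hAB hA => ?_⟩
  have : A.Normal := hAB.1
  have : B.Normal := hAB.2.1
  refine FCentralSection.of_comap hF hf (hN.2 _ _ (hAB.comap hf) ?_)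
  calc A.comap (QuotientGroup.mk' M) ≤ (N.map (QuotientGroup.mk' M)).comap (QuotientGroup.mk' M) :=
        Subgroup.comap_mono hA
    _ = N := by rw [Subgroup.comap_map_eq, QuotientGroup.ker_mk', sup_eq_left.2 hMN]

theorem isComplement'_of_isCoatom {G : Type} [Group G] {M U : Subgroup G}
    (hM : IsChiefFactor M ⊥) (hcomm : ∀ x ∈ M, ∀ y ∈ M, Commute x y) (hU : IsCoatom U)
    (hMU : ¬ M ≤ U) : M.IsComplement' U := by
  have : M.Normal := hM.1
  have hsup : M ⊔ U = ⊤ := hU.2 _ (lt_of_le_of_ne le_sup_right fun h => hMU (h ▸ le_sup_left))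
  have hmul (g : G) : ∃ m ∈ M, ∃ u ∈ U, m * u = g := by
    have : g ∈ ((M ⊔ U : Subgroup G) : Set G) := by simp [hsup]
    rw [Subgroup.normal_mul] at this
    exact Set.mem_mul.1 this
  -- `M ⊓ U` is normalised by `U`, and centralised by the abelian group `M`
  have hnormal : (M ⊓ U).Normal := ⟨fun x ⟨hxM, hxU⟩ g => by
    obtain ⟨m, hm, u, hu, rfl⟩ := hmul g
    have hux : u * x * u⁻¹ ∈ M := ‹M.Normal›.conj_mem x hxM u
    have : m * u * x * (m * u)⁻¹ = u * x * u⁻¹ := by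
      calc m * u * x * (m * u)⁻¹ = m * (u * x * u⁻¹) * m⁻¹ := by group
        _ = u * x * u⁻¹ := by rw [(hcomm m hm _ hux).eq, mul_inv_cancel_right]
    rw [this]
    exact ⟨hux, U.mul_mem (U.mul_mem hu hxU) (U.inv_mem hu)⟩⟩
  have hbot : M ⊓ U = ⊥ := (hM.2.2.2 _ hnormal bot_le inf_le_left).resolve_right
    fun h => hMU (h ▸ inf_le_right)
  exact Subgroup.isComplement'_of_disjoint_and_mul_eq_univ (disjoint_iff.2 hbot)
    (by rw [← Subgroup.normal_mul, hsup]; rfl)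

section Complement

variable {G : Type} [Group G] {M U : Subgroup G} [M.Normal] (hc : M.IsComplement' U)
  (K : Subgroup G) [K.Normal] (hK : K ≤ secCentralizer M ⊥)

/-- The map `G → [M](G/K)`, `mu ↦ (m, uK)` for `m ∈ M`, `u ∈ U`. -/
noncomputable def complementToSecSDP : G →* secSDP M ⊥ K hK :=
  (SemidirectProduct.map (QuotientGroup.mk' _) ((QuotientGroup.mk' K).comp U.subtype)
    fun _ => by ext; rfl).comp (SemidirectProduct.mulEquivSubgroup hc).symm.toMonoidHom

theorem complementToSecSDP_surjective (hMK : M ≤ K) :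
    Function.Surjective (complementToSecSDP hc K hK) := by
  rw [complementToSecSDP, MonoidHom.coe_comp]
  refine .comp (SemidirectProduct.map_surjective _ (QuotientGroup.mk'_surjective _) ?_)
    (MulEquiv.surjective _)
  intro y
  induction y using QuotientGroup.induction_on with
  | H g =>
    obtain ⟨x, rfl⟩ := (SemidirectProduct.mulEquivSubgroup hc).surjective g
    refine ⟨x.right, ?_⟩
    simpa using hMK x.left.2

theorem complementToSecSDP_eq_one_iff {m : G} (hm : m ∈ M) :
    complementToSecSDP hc K hK m = 1 ↔ m = 1 := by
  have : (SemidirectProduct.mulEquivSubgroup hc).symm m = SemidirectProduct.inl ⟨m, hm⟩ := by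
    rw [MulEquiv.symm_apply_eq]; simp
  simp only [complementToSecSDP, MonoidHom.comp_apply, MulEquiv.coe_toMonoidHom, this,
    SemidirectProduct.map_inl]
  rw [map_eq_one_iff _ SemidirectProduct.inl_injective, QuotientGroup.mk'_apply,
    QuotientGroup.eq_one_iff, Subgroup.mem_subgroupOf, Subgroup.mem_bot]

end Complement

namespace GroupClass.IsFormation

variable {F : GroupClass} {G : Type} [Group G] [Finite G]

theorem mem_of_quotient_mem_of_fCentralSection (hF : F.IsFormation) (hSat : F.Saturated)
    {M : Subgroup G} [M.Normal] (hM : IsChiefFactor M ⊥) (hcent : FCentralSection F M ⊥)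
    (hGM : F (G ⧸ M)) : F G := by
  rcases hM.2.2.2 _ inferInstance bot_le (F.residual_le inferInstance hGM) with hres | hres
  · exact hF.mem_iff_residual_eq_bot.2 hres
  obtain ⟨K, hK, hKC, hsdp⟩ := hcent
  have hMK : M ≤ K := hres.symm.trans_le <| F.residual_le hK <|
    hF.mem_of_surjective (secSDPToQuotient_surjective M ⊥ K hKC bot_le) hsdp
  have hcomm : ∀ x ∈ M, ∀ y ∈ M, Commute x y := fun x hx =>
    mem_secCentralizer_bot_iff.1 (hKC (hMK hx))
  by_cases hMΦ : M ≤ frattini G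
  · exact hSat G (hres ▸ hMΦ)
  obtain ⟨U, hU, hMU⟩ : ∃ U : Subgroup G, IsCoatom U ∧ ¬ M ≤ U := by
    simpa [frattini, Order.radical, le_iInf_iff] using hMΦ
  have hc := isComplement'_of_isCoatom hM hcomm hU hMU
  have hMker : M ≤ (complementToSecSDP hc K hKC).ker := hres.symm.trans_le <|
    hF.residual_le_ker (complementToSecSDP_surjective hc K hKC hMK) hsdp
  obtain ⟨⟨m, hm⟩, hm1⟩ := Subgroup.ne_bot_iff_exists_ne_one.1 (bot_lt_iff_ne_bot.1 hM.2.2.1)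
  exact absurd (Subtype.ext ((complementToSecSDP_eq_one_iff hc K hKC hm).1 (hMker hm))) hm1

end GroupClass.IsFormation

theorem FHypercentralIn.mem_of_quotient_mem {F : GroupClass} (hF : F.IsFormation)
    (hSat : F.Saturated) {G : Type} [Group G] [Finite G] {N : Subgroup G}
    (hN : FHypercentralIn F N) (hq : haveI := hN.1; F (G ⧸ N)) : F G := by
  induction h : Nat.card G using Nat.strong_induction_on generalizing G with
  | _ n ih =>
  have := hN.1
  rcases eq_or_ne N ⊥ with rfl | hne
  · exact hF.isoClosed _ _ QuotientGroup.quotientBot hq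
  obtain ⟨M, hMN, hM⟩ := exists_isChiefFactor_bot_le hN.1 hne
  have := hM.1
  have hcard : Nat.card (G ⧸ M) < n := by
    rw [← h, ← Subgroup.index_eq_card, ← M.card_mul_index]
    exact lt_mul_of_one_lt_left (Nat.pos_of_ne_zero M.index_ne_zero_of_finite)
      ((Subgroup.one_lt_card_iff_ne_bot M).2 (bot_lt_iff_ne_bot.1 hM.2.2.1))
  have hGM : F (G ⧸ M) := ih _ hcard (hN.map_mk' hF hMN)
    (hF.isoClosed _ _ (QuotientGroup.quotientQuotientEquivQuotient M N hMN).symm hq) rfl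
  exact hF.mem_of_quotient_mem_of_fCentralSection hSat hM (hN.2 M ⊥ hM hMN) hGM

/-- **Lemma 5.** For a saturated formation `𝔉` and a finite group `G`, the following are
equivalent: (i) `G ∈ 𝔉`; (ii) every chief factor of `G` is `𝔉`-central in `G`;
(iii) `G` has a normal `𝔉`-hypercentral subgroup `N` with `G/N ∈ 𝔉`. -/
theorem mem_iff_chiefFactors_FCentral_iff_exists_FHypercentral
    (F : GroupClass) (hF : F.IsFormation) (hSat : F.Saturated)
    (G : Type) [Group G] [Finite G] :
    (F G ↔ ∀ H K : Subgroup G, ∀ hcf : IsChiefFactor H K,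
        @FCentralSection F G _ _ H K hcf.1 hcf.2.1) ∧
      (F G ↔ ∃ N : Subgroup G, ∃ h : FHypercentralIn F N,
        haveI := h.1
        F (G ⧸ N)) := by
  have h12 : F G → ∀ H K : Subgroup G, ∀ hcf : IsChiefFactor H K,
      @FCentralSection F G _ _ H K hcf.1 hcf.2.1 := fun hG H K hcf =>
    @GroupClass.IsFormation.fCentralSection_of_mem F hF G _ _ hG H K hcf.1 hcf.2.1
  have h23 : (∀ H K : Subgroup G, ∀ hcf : IsChiefFactor H K,
      @FCentralSection F G _ _ H K hcf.1 hcf.2.1) →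
      ∃ N : Subgroup G, ∃ h : FHypercentralIn F N, haveI := h.1; F (G ⧸ N) := fun h =>
    ⟨⊤, ⟨inferInstance, fun H K hcf _ => h H K hcf⟩, hF.quot_residual_mem G ⊤ _ le_top⟩
  have h31 : (∃ N : Subgroup G, ∃ h : FHypercentralIn F N, haveI := h.1; F (G ⧸ N)) → F G :=
    fun ⟨_, hN, hq⟩ => hN.mem_of_quotient_mem hF hSat hq
  exact ⟨⟨h12, h31 ∘ h23⟩, ⟨h23 ∘ h12, h31⟩⟩
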